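/- Fix β ∈ ℕ with β ≥ 0 and θ > 0, and consider the generalized gamma-type density on ℝ, q_θ(x) = (θ^{β+1/2}/Γ(β+1/2)) x^{2β} e^{−θx²}. Then: (i) ∂_θ log q_θ(x) = (2β+1)/(2θ) − x², and for every x ≠ 0, A_θ(d/dx ∂_θ log q_θ)(x) = −4θ · ∂_θ log q_θ(x); (ii) the function Φ_θ(x) := −x²/(4θ) + (2β+1)/(8θ²) satisfies A_θ(Φ_θ′)(x) = −∂_θ log q_θ(x) for every x ≠ 0 and E_θ[Φ_θ] = 0, i.e. Φ_θ is the Wasserstein score function of the scale parameter θ. -/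

import Mathlib

open MeasureTheory Real

/-- One-dimensional divergence-based Stein operator `A_q f = (q f)′ / q`. -/
noncomputable def stein1 (q f : ℝ → ℝ) (x : ℝ) : ℝ :=
  deriv (fun y => q y * f y) x / q x

/-- Generalized gamma-type density `q_θ(x) = θ^{β+1/2}/Γ(β+1/2) · x^{2β} e^{−θx²}`. -/
noncomputable def ggDens (β : ℕ) (θ x : ℝ) : ℝ :=
  θ ^ ((β : ℝ) + 1 / 2) / Real.Gamma ((β : ℝ) + 1 / 2) * x ^ (2 * β) * Real.exp (-θ * x ^ 2)

/-!
Since `log q_θ(x) = (β + 1/2) log θ - θ x² + (terms free of θ)`, the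
θ-score is `(2β+1)/(2θ) - x²`, whose `x`-derivative is linear. On linear functions `f = a·x`
the Stein operator is `A_θ f = f' + f · (2β/x - 2θx) = a(2β+1) - 2θ a x²`, which gives both
Stein identities. The expectation of `Φ_θ` reduces to the second moment
`E_θ[x²] = Γ(β+3/2)/(θ Γ(β+1/2)) = (2β+1)/(2θ)`, a Gamma integral after `x ↦ |x|`.
-/

open Topology

lemma stein1_eq_of_hasDerivAt {q f : ℝ → ℝ} {x f' : ℝ} (hq : DifferentiableAt ℝ q x)
    (hf : HasDerivAt f f' x) (hqx : q x ≠ 0) :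
    stein1 q f x = f' + f x * logDeriv q x := by
  have h_prod : HasDerivAt (fun y => q y * f y) (deriv q x * f x + q x * f') x :=
    hq.hasDerivAt.mul hf
  rw [stein1, h_prod.deriv, logDeriv_apply]
  field_simp
  ring

section GammaMoments

variable {θ : ℝ}

lemma integrable_pow_two_mul_mul_exp_neg_mul_sq (hθ : 0 < θ) (n : ℕ) :
    Integrable fun x : ℝ => x ^ (2 * n) * exp (-θ * x ^ 2) := by
  simpa only [rpow_natCast] using
    integrable_rpow_mul_exp_neg_mul_sq hθ (s := ((2 * n : ℕ) : ℝ))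
      (neg_one_lt_zero.trans_le (Nat.cast_nonneg _))

lemma integral_pow_two_mul_mul_exp_neg_mul_sq (hθ : 0 < θ) (n : ℕ) :
    ∫ x : ℝ, x ^ (2 * n) * exp (-θ * x ^ 2) = θ ^ (-((n : ℝ) + 1 / 2)) * Gamma (n + 1 / 2) := by
  have h_even : (fun x : ℝ => x ^ (2 * n) * exp (-θ * x ^ 2))
      = fun x => |x| ^ (2 * n) * exp (-θ * |x| ^ 2) := by
    funext x
    rw [pow_mul, pow_mul, sq_abs]
  have h_rpow : ∫ x in Set.Ioi (0 : ℝ), x ^ (2 * n) * exp (-θ * x ^ 2)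
      = ∫ x in Set.Ioi (0 : ℝ), x ^ ((2 * n : ℕ) : ℝ) * exp (-θ * x ^ (2 : ℝ)) := by
    refine setIntegral_congr_fun measurableSet_Ioi fun x _ => ?_
    rw [rpow_natCast, rpow_two]
  rw [h_even, integral_comp_abs (f := fun x => x ^ (2 * n) * exp (-θ * x ^ 2)), h_rpow,
    integral_rpow_mul_exp_neg_mul_rpow two_pos (neg_one_lt_zero.trans_le (Nat.cast_nonneg _)) hθ]
  push_cast
  ring_nf

end GammaMoments

lemma deriv_wassersteinScore (θ c : ℝ) :
    deriv (fun y => -y ^ 2 / (4 * θ) + c) = fun y => -(2 * θ)⁻¹ * y := by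
  funext y
  have h_Φ : HasDerivAt (fun y => -y ^ 2 / (4 * θ) + c) (-(2 * y ^ 1) / (4 * θ)) y :=
    ((hasDerivAt_pow 2 y).neg.div_const _).add_const c
  rw [h_Φ.deriv]
  ring

section GeneralizedGamma

variable {β : ℕ} {θ : ℝ}

lemma ggDens_const_pos (hθ : 0 < θ) :
    0 < θ ^ ((β : ℝ) + 1 / 2) / Gamma ((β : ℝ) + 1 / 2) :=
  div_pos (rpow_pos_of_pos hθ _) (Gamma_pos_of_pos (by positivity))

lemma ggDens_ne_zero (hθ : 0 < θ) {x : ℝ} (hx : x ≠ 0) : ggDens β θ x ≠ 0 := by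
  have := ggDens_const_pos (β := β) hθ
  unfold ggDens
  positivity

lemma log_ggDens {t x : ℝ} (ht : 0 < t) (hx : x ≠ 0) :
    log (ggDens β t x) = ((β : ℝ) + 1 / 2) * log t - log (Gamma ((β : ℝ) + 1 / 2))
      + log (x ^ (2 * β)) - t * x ^ 2 := by
  rw [ggDens, log_mul (mul_ne_zero (ggDens_const_pos ht).ne' (pow_ne_zero _ hx)) (exp_ne_zero _),
    log_mul (ggDens_const_pos ht).ne' (pow_ne_zero _ hx),
    log_div (rpow_pos_of_pos ht _).ne' (Gamma_pos_of_pos (by positivity)).ne', log_rpow ht,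
    log_exp]
  ring

lemma deriv_log_ggDens_param (hθ : 0 < θ) {x : ℝ} (hx : x ≠ 0) :
    deriv (fun t => log (ggDens β t x)) θ = (2 * (β : ℝ) + 1) / (2 * θ) - x ^ 2 := by
  have h_log : (fun t => ((β : ℝ) + 1 / 2) * log t - log (Gamma ((β : ℝ) + 1 / 2))
      + log (x ^ (2 * β)) - t * x ^ 2) =ᶠ[𝓝 θ] fun t => log (ggDens β t x) := by
    filter_upwards [Ioi_mem_nhds hθ] with t ht using (log_ggDens ht hx).symm
  have h_deriv : HasDerivAt (fun t => ((β : ℝ) + 1 / 2) * log t - log (Gamma ((β : ℝ) + 1 / 2))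
      + log (x ^ (2 * β)) - t * x ^ 2) (((β : ℝ) + 1 / 2) * θ⁻¹ - x ^ 2) θ :=
    ((((hasDerivAt_log hθ.ne').const_mul _).sub_const _).add_const _).sub
      (hasDerivAt_mul_const _)
  rw [(h_deriv.congr_of_eventuallyEq h_log.symm).deriv]
  field_simp

lemma deriv_deriv_log_ggDens_param_eventuallyEq (hθ : 0 < θ) {x : ℝ} (hx : x ≠ 0) :
    (fun y => deriv (fun z => deriv (fun t => log (ggDens β t z)) θ) y) =ᶠ[𝓝 x]
      fun y => -2 * y := by
  filter_upwards [eventually_ne_nhds hx] with y hy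
  have h_score : (fun z => deriv (fun t => log (ggDens β t z)) θ)
      =ᶠ[𝓝 y] fun z => (2 * (β : ℝ) + 1) / (2 * θ) - z ^ 2 := by
    filter_upwards [eventually_ne_nhds hy] with z hz using deriv_log_ggDens_param hθ hz
  rw [h_score.deriv_eq, ((hasDerivAt_pow 2 y).const_sub _).deriv]
  ring

lemma hasDerivAt_ggDens {x : ℝ} (hx : x ≠ 0) :
    HasDerivAt (ggDens β θ) (ggDens β θ x * (2 * β / x - 2 * θ * x)) x := by
  have h_poly := ((hasDerivAt_pow (2 * β) x).const_mul
    (θ ^ ((β : ℝ) + 1 / 2) / Gamma ((β : ℝ) + 1 / 2)))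
  have h_exp := ((hasDerivAt_pow 2 x).const_mul (-θ)).exp
  have h_pow : ((2 * β : ℕ) : ℝ) * x ^ (2 * β - 1) = 2 * β * x ^ (2 * β) / x := by
    rcases Nat.eq_zero_or_pos β with rfl | hβ
    · simp
    · rw [pow_sub₀ x hx (by omega), pow_one]
      push_cast
      ring
  refine (h_poly.mul h_exp).congr_deriv ?_
  rw [h_pow, ggDens]
  field_simp
  ring

lemma logDeriv_ggDens (hθ : 0 < θ) {x : ℝ} (hx : x ≠ 0) :
    logDeriv (ggDens β θ) x = 2 * β / x - 2 * θ * x := by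
  rw [logDeriv_apply, (hasDerivAt_ggDens hx).deriv,
    mul_div_cancel_left₀ _ (ggDens_ne_zero hθ hx)]

lemma stein1_ggDens_of_eventuallyEq_mul (hθ : 0 < θ) {x : ℝ} (hx : x ≠ 0) {f : ℝ → ℝ} {a : ℝ}
    (hf : f =ᶠ[𝓝 x] fun y => a * y) :
    stein1 (ggDens β θ) f x = a * (2 * β + 1) - 2 * θ * a * x ^ 2 := by
  have hf' : HasDerivAt f a x := by
    simpa using ((hasDerivAt_id x).const_mul a).congr_of_eventuallyEq hf
  rw [stein1_eq_of_hasDerivAt (hasDerivAt_ggDens hx).differentiableAt hf' (ggDens_ne_zero hθ hx),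
    hf.eq_of_nhds, logDeriv_ggDens hθ hx]
  field_simp
  ring

lemma integrable_ggDens_mul_pow_two_mul (hθ : 0 < θ) (k : ℕ) :
    Integrable fun x => ggDens β θ x * x ^ (2 * k) := by
  refine ((integrable_pow_two_mul_mul_exp_neg_mul_sq hθ (β + k)).const_mul
    (θ ^ ((β : ℝ) + 1 / 2) / Gamma ((β : ℝ) + 1 / 2))).congr (.of_forall fun x => ?_)
  simp only [ggDens]
  ring

lemma integral_ggDens_mul_pow_two_mul (hθ : 0 < θ) (k : ℕ) :
    ∫ x, ggDens β θ x * x ^ (2 * k) = Gamma (β + k + 1 / 2) / (Gamma (β + 1 / 2) * θ ^ k) := by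
  have h_integrand : (fun x => ggDens β θ x * x ^ (2 * k)) = fun x =>
      θ ^ ((β : ℝ) + 1 / 2) / Gamma ((β : ℝ) + 1 / 2) * (x ^ (2 * (β + k)) * exp (-θ * x ^ 2)) := by
    funext x
    simp only [ggDens]
    ring
  have h_pow : θ ^ ((β : ℝ) + 1 / 2) * θ ^ (-(((β + k : ℕ) : ℝ) + 1 / 2)) = (θ ^ k)⁻¹ := by
    rw [← rpow_add hθ, ← rpow_natCast, ← rpow_neg hθ.le]
    push_cast
    ring_nf
  rw [h_integrand, integral_const_mul, integral_pow_two_mul_mul_exp_neg_mul_sq hθ,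
    div_mul_eq_mul_div, ← mul_assoc, h_pow]
  push_cast
  field_simp

lemma integral_ggDens (hθ : 0 < θ) : ∫ x, ggDens β θ x = 1 := by
  have h := integral_ggDens_mul_pow_two_mul (β := β) hθ 0
  simp only [mul_zero, pow_zero, mul_one, Nat.cast_zero, add_zero] at h
  rw [h, div_self (Gamma_pos_of_pos (by positivity)).ne']

lemma integral_ggDens_mul_sq (hθ : 0 < θ) :
    ∫ x, ggDens β θ x * x ^ 2 = (2 * β + 1) / (2 * θ) := by
  have h := integral_ggDens_mul_pow_two_mul (β := β) hθ 1
  rw [Nat.cast_one, add_right_comm, Gamma_add_one (by positivity)] at h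
  rw [h]
  field_simp [(Gamma_pos_of_pos (by positivity : (0 : ℝ) < β + 1 / 2)).ne']

lemma integral_ggDens_mul_wassersteinScore (hθ : 0 < θ) :
    ∫ x, ggDens β θ x * (-x ^ 2 / (4 * θ) + (2 * (β : ℝ) + 1) / (8 * θ ^ 2)) = 0 := by
  have h_integrand : (fun x => ggDens β θ x * (-x ^ 2 / (4 * θ) + (2 * (β : ℝ) + 1) / (8 * θ ^ 2)))
      = fun x => -(4 * θ)⁻¹ * (ggDens β θ x * x ^ (2 * 1))
        + (2 * (β : ℝ) + 1) / (8 * θ ^ 2) * ggDens β θ x := by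
    funext x
    ring
  have h_int : Integrable (ggDens β θ) := by
    simpa using integrable_ggDens_mul_pow_two_mul (β := β) hθ 0
  rw [h_integrand, integral_add ((integrable_ggDens_mul_pow_two_mul hθ 1).const_mul _)
    (h_int.const_mul _), integral_const_mul, integral_const_mul, mul_one,
    integral_ggDens_mul_sq hθ, integral_ggDens hθ]
  field_simp
  ring

end GeneralizedGamma

/-- for the generalized gamma-type distribution,
(i) `∂_θ log q_θ(x) = (2β+1)/(2θ) − x²` and `A_θ(d/dx ∂_θ log q_θ) = −4θ ∂_θ log q_θ` on x ≠ 0;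
(ii) `Φ_θ(x) = −x²/(4θ) + (2β+1)/(8θ²)` solves `A_θ(Φ_θ′) = −∂_θ log q_θ` with `E_θ[Φ_θ] = 0`,
i.e. it is the Wasserstein score function of the scale parameter. -/
theorem stmt14 (β : ℕ) (θ : ℝ) (hθ : 0 < θ) :
    (∀ x : ℝ, x ≠ 0 →
        (deriv (fun t => Real.log (ggDens β t x)) θ
            = (2 * (β : ℝ) + 1) / (2 * θ) - x ^ 2)
        ∧ stein1 (ggDens β θ)
              (fun y => deriv (fun z => deriv (fun t => Real.log (ggDens β t z)) θ) y) x
            = -(4 * θ) * deriv (fun t => Real.log (ggDens β t x)) θ)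
    ∧ (∀ x : ℝ, x ≠ 0 →
        stein1 (ggDens β θ)
            (deriv (fun y => -y ^ 2 / (4 * θ) + (2 * (β : ℝ) + 1) / (8 * θ ^ 2))) x
          = - deriv (fun t => Real.log (ggDens β t x)) θ)
    ∧ ∫ x : ℝ, ggDens β θ x * (-x ^ 2 / (4 * θ) + (2 * (β : ℝ) + 1) / (8 * θ ^ 2)) = 0 := by
  refine ⟨fun x hx => ⟨deriv_log_ggDens_param hθ hx, ?_⟩, fun x hx => ?_,
    integral_ggDens_mul_wassersteinScore hθ⟩
  · rw [stein1_ggDens_of_eventuallyEq_mul hθ hx (deriv_deriv_log_ggDens_param_eventuallyEq hθ hx),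
      deriv_log_ggDens_param hθ hx]
    field_simp
    ring
  · rw [stein1_ggDens_of_eventuallyEq_mul hθ hx (deriv_wassersteinScore θ _).eventuallyEq,
      deriv_log_ggDens_param hθ hx]
    field_simp
    ring
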